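/- Let n ≥ 2, let M be an n×n diagonal matrix with positive diagonal entries, let D be an n×n real matrix such that K := D + M⁻¹ e₁ e₁ᵀ is invertible, and set A := (1/2) K⁻¹. Let c ∈ ℝⁿ with first entry c₁ = 0. Then for every integer j ≥ 1, the Runge–Kutta simplifying condition A c^{j−1} = c^j / j holds if and only if D c^j = (j/2) c^{j−1}, where powers of c are taken entrywise (with c⁰ := 𝟙). In particular, the stage order of the Runge–Kutta method with coefficient matrix A equals the order of the differentiation operator D. -/
import Mathlib


open Matrix

/-- First standard basis vector of ℝⁿ. -/
noncomputable def e1 (n : ℕ) : Fin n → ℝ := fun i => if (i : ℕ) = 0 then 1 else 0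

theorem stmt7 (n : ℕ) (hn : 2 ≤ n)
    (M D : Matrix (Fin n) (Fin n) ℝ)
    (hM : ∃ d : Fin n → ℝ, M = Matrix.diagonal d ∧ ∀ i, 0 < d i)
    (hK : IsUnit (D + M⁻¹ * Matrix.vecMulVec (e1 n) (e1 n)))
    (c : Fin n → ℝ) (hc : c ⟨0, by omega⟩ = 0)
    (j : ℕ) (hj : 1 ≤ j) :
    ((((1 : ℝ) / 2) • (D + M⁻¹ * Matrix.vecMulVec (e1 n) (e1 n))⁻¹) *ᵥ
        (fun i => c i ^ (j - 1)) = ((j : ℝ))⁻¹ • (fun i => c i ^ j)) ↔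
      (D *ᵥ (fun i => c i ^ j) = ((j : ℝ) / 2) • (fun i => c i ^ (j - 1))) := by
  set K := D + M⁻¹ * Matrix.vecMulVec (e1 n) (e1 n) with hKdef
  set x : Fin n → ℝ := fun i => c i ^ j with hx
  set y : Fin n → ℝ := fun i => c i ^ (j - 1) with hy
  have hjR : (j : ℝ) ≠ 0 := by exact_mod_cast Nat.one_le_iff_ne_zero.mp hj
  have hKdet : IsUnit K.det := (Matrix.isUnit_iff_isUnit_det K).mp hK
  have hKK : K * K⁻¹ = 1 := Matrix.mul_nonsing_inv K hKdet
  have hKK' : K⁻¹ * K = 1 := Matrix.nonsing_inv_mul K hKdet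
  have hx0 : x ⟨0, by omega⟩ = 0 := by
    simp [hx, hc, zero_pow (Nat.one_le_iff_ne_zero.mp hj)]
  have hvv : Matrix.vecMulVec (e1 n) (e1 n) *ᵥ x = 0 := by
    funext i
    have : ∀ k : Fin n, e1 n i * e1 n k * x k = 0 := by
      intro k
      by_cases h : (k : ℕ) = 0
      · have : k = ⟨0, by omega⟩ := Fin.ext h
        simp [this, hx0]
      · simp [e1, h]
    simp [Matrix.vecMulVec, Matrix.mulVec, dotProduct]
    exact Finset.sum_eq_zero fun k _ => this k
  have hKx : K *ᵥ x = D *ᵥ x := by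
    rw [hKdef, Matrix.add_mulVec, ← Matrix.mulVec_mulVec, hvv, Matrix.mulVec_zero, add_zero]
  constructor
  · intro h
    have h2 : K *ᵥ ((((1 : ℝ) / 2) • K⁻¹) *ᵥ y) = K *ᵥ (((j : ℝ))⁻¹ • x) := by rw [h]
    rw [Matrix.smul_mulVec, Matrix.mulVec_smul, Matrix.mulVec_smul,
      Matrix.mulVec_mulVec, hKK, Matrix.one_mulVec, hKx] at h2
    funext i
    have := congrFun h2 i
    simp only [Pi.smul_apply, smul_eq_mul] at this ⊢
    field_simp at this ⊢
    linarith
  · intro h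
    have hKx2 : K *ᵥ x = ((j : ℝ) / 2) • y := by rw [hKx, h]
    have h2 : K⁻¹ *ᵥ (K *ᵥ x) = K⁻¹ *ᵥ (((j : ℝ) / 2) • y) := by rw [hKx2]
    rw [Matrix.mulVec_mulVec, hKK', Matrix.one_mulVec, Matrix.mulVec_smul] at h2
    rw [Matrix.smul_mulVec]
    funext i
    have := congrFun h2 i
    simp only [Pi.smul_apply, smul_eq_mul] at this ⊢
    field_simp at this ⊢
    linarith
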